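/- For every Ste > 0, the equation z·exp(z²)·erf(z) = Ste/√π has a unique positive solution z. -/

import Mathlib

/-! The integrand of `erf` is positive, so `erf` is strictly increasing with `erf 0 = 0`.
Hence `z ↦ z · exp (z²) · erf z` is a product of three nonnegative strictly increasing functions
on `[0, ∞)`, and it grows at least like `z · erf 1`. The intermediate value theorem
gives a positive solution and strict monotonicity makes it unique. -/

noncomputable def erf (z : ℝ) : ℝ :=
  (2 / Real.sqrt Real.pi) * ∫ t in (0:ℝ)..z, Real.exp (-t^2)

open Real Set Filter

theorem hasDerivAt_erf (x : ℝ) : HasDerivAt erf (2 / √π * exp (-x ^ 2)) x := by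
  have hcont : Continuous fun t : ℝ => exp (-t ^ 2) := by fun_prop
  exact (intervalIntegral.integral_hasDerivAt_right (hcont.intervalIntegrable 0 x)
    (hcont.stronglyMeasurableAtFilter _ _) hcont.continuousAt).const_mul _

theorem continuous_erf : Continuous erf :=
  continuous_iff_continuousAt.2 fun x => (hasDerivAt_erf x).continuousAt

theorem strictMono_erf : StrictMono erf :=
  strictMono_of_deriv_pos fun x => by rw [(hasDerivAt_erf x).deriv]; positivity

@[simp]
theorem erf_zero : erf 0 = 0 := by simp [erf]

theorem erf_pos {z : ℝ} (hz : 0 < z) : 0 < erf z := erf_zero ▸ strictMono_erf hz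

theorem StrictMonoOn.mul_of_nonneg {α M₀ : Type*} [MulZeroClass M₀] [Preorder M₀]
    [PosMulStrictMono M₀] [MulPosMono M₀] [Preorder α] {f g : α → M₀} {s : Set α}
    (hf : StrictMonoOn f s) (hg : StrictMonoOn g s) (hf₀ : ∀ x ∈ s, 0 ≤ f x)
    (hg₀ : ∀ x ∈ s, 0 ≤ g x) : StrictMonoOn (f * g) s :=
  fun _ ha _ hb h => mul_lt_mul'' (hf ha hb h) (hg ha hb h) (hf₀ _ ha) (hg₀ _ ha)

theorem strictMonoOn_mul_exp_sq_mul_erf :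
    StrictMonoOn (fun z => z * exp (z ^ 2) * erf z) (Ici 0) := by
  have hexp : StrictMonoOn (fun z : ℝ => exp (z ^ 2)) (Ici 0) :=
    exp_strictMono.comp_strictMonoOn (pow_left_strictMonoOn₀ two_ne_zero)
  have hmul : StrictMonoOn (fun z : ℝ => z * exp (z ^ 2)) (Ici 0) :=
    strictMonoOn_id.mul_of_nonneg hexp (fun _ hz => hz) fun _ _ => (exp_pos _).le
  exact hmul.mul_of_nonneg (strictMono_erf.strictMonoOn _)
    (fun z hz => mul_nonneg hz (exp_pos _).le) fun z hz => erf_zero ▸ strictMono_erf.monotone hz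

theorem tendsto_mul_exp_sq_mul_erf_atTop :
    Tendsto (fun z => z * exp (z ^ 2) * erf z) atTop atTop := by
  refine tendsto_atTop_mono' _ ?_ (tendsto_id.atTop_mul_const (erf_pos one_pos))
  filter_upwards [eventually_ge_atTop 1] with z hz
  have hz₀ : 0 ≤ z := zero_le_one.trans hz
  exact mul_le_mul (le_mul_of_one_le_right hz₀ (one_le_exp (sq_nonneg z)))
    (strictMono_erf.monotone hz) (erf_pos one_pos).le (by positivity)

theorem StrictMonoOn.existsUnique_gt_eq_of_tendsto_atTop {α δ : Type*}
    [ConditionallyCompleteLinearOrder α] [TopologicalSpace α] [OrderTopology α] [DenselyOrdered α]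
    [LinearOrder δ] [TopologicalSpace δ] [OrderClosedTopology δ] {f : α → δ} {a : α} {y : δ}
    (hmono : StrictMonoOn f (Ici a)) (hcont : ContinuousOn f (Ici a))
    (htop : Tendsto f atTop atTop) (hy : f a < y) : ∃! z, a < z ∧ f z = y := by
  have : Nonempty α := ⟨a⟩
  obtain ⟨b, hyb, hab⟩ := ((htop.eventually_ge_atTop y).and (eventually_ge_atTop a)).exists
  obtain ⟨z, hz, rfl⟩ :=
    intermediate_value_Ioc hab (hcont.mono Icc_subset_Ici_self) ⟨hy, hyb⟩
  exact ⟨z, ⟨hz.1, rfl⟩, fun w hw => hmono.injOn (le_of_lt hw.1) (le_of_lt hz.1) hw.2⟩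

theorem stmt_9 (Ste : ℝ) (hSte : 0 < Ste) :
    ∃! z : ℝ, 0 < z ∧ z * Real.exp (z^2) * erf z = Ste / Real.sqrt Real.pi := by
  refine strictMonoOn_mul_exp_sq_mul_erf.existsUnique_gt_eq_of_tendsto_atTop ?_
    tendsto_mul_exp_sq_mul_erf_atTop ?_
  · exact (continuous_id.mul (by fun_prop) |>.mul continuous_erf).continuousOn
  · simpa using div_pos hSte (sqrt_pos.2 pi_pos)
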